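/- The class of quasi-Gorenstein projective R-modules is closed under direct summands: if G = M ⊕ M' is quasi-Gorenstein projective, then M is quasi-Gorenstein projective. -/

import Mathlib

/-!
Write `Ext¹(C, Q) = 0` for "every extension of `C` by `Q` splits". Since the `P n` are projective,
the lifting condition in the definition says exactly that `Ext¹(K n, Q) = 0` for every
quasi-projective `Q`, and this class of modules is closed under extensions and direct summands.

Starting from `K 0 ≅ M ⊕ M'`, resolve `M` and `M'` simultaneously. If `Z`, `Z'` are their `n`-th
syzygies, with projective covers whose kernels `N`, `N'` are extensions
`0 → K (n + 1) → N → Z' → 0` and `0 → K (n + 1) → N' → Z → 0`, the horseshoe lemma applied to these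
extensions gives the same situation one step further. Dually, the cohorseshoe lemma builds the
cosyzygies; it needs `Ext¹(K n, T) = 0` for projective `T`, which holds because projective modules
are quasi-projective. Every (co)syzygy obtained is an extension of modules with vanishing `Ext¹`,
so the resolution of `M` glued from the two halves satisfies the lifting condition.
-/

open CategoryTheory

universe u
variable {R : Type u} [Ring R]

/-- A module `Q` is quasi-projective if every homomorphism from `Q` to a quotient
of `Q` lifts to an endomorphism of `Q`. -/
def QuasiProjective (Q : ModuleCat.{u} R) : Prop :=
  ∀ (B : ModuleCat.{u} R) (g : Q ⟶ B), Function.Surjective g →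
    ∀ f : Q ⟶ B, ∃ h : Q ⟶ Q, h ≫ g = f

/-- `M` is quasi-Gorenstein projective if it is a syzygy of an exact complex of
projective modules (given by short exact sequences `0 → K (n+1) → P n → K n → 0`)
that remains exact under `Hom(-, Q)` for every quasi-projective module `Q`. -/
def QuasiGorensteinProjective (M : ModuleCat.{u} R) : Prop :=
  ∃ (K P : ℤ → ModuleCat.{u} R) (ι : ∀ n, K (n + 1) ⟶ P n) (π : ∀ n, P n ⟶ K n),
    (∀ n, Module.Projective R (P n)) ∧
    (∀ n, Function.Injective (ι n)) ∧
    (∀ n, Function.Surjective (π n)) ∧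
    (∀ n, Function.Exact (ι n) (π n)) ∧
    (∀ n (Q : ModuleCat.{u} R), QuasiProjective Q →
      ∀ f : K (n + 1) ⟶ Q, ∃ g : P n ⟶ Q, ι n ≫ g = f) ∧
    Nonempty (M ≅ K 0)

open CategoryTheory.Limits

structure ShortExactSeq (A X B : ModuleCat.{u} R) where
  i : A →ₗ[R] X
  p : X →ₗ[R] B
  injective : Function.Injective i
  surjective : Function.Surjective p
  exact : Function.Exact i p

section Exact

variable {M N P : Type*} [AddCommGroup M] [Module R M] [AddCommGroup N] [Module R N]
  [AddCommGroup P] [Module R P]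

theorem LinearMap.exists_comp_eq_of_range_le {j : N →ₗ[R] M} (hj : Function.Injective j)
    {ψ : P →ₗ[R] M} (h : LinearMap.range ψ ≤ LinearMap.range j) :
    ∃ f : P →ₗ[R] N, j ∘ₗ f = ψ :=
  ⟨(LinearEquiv.ofInjective j hj).symm.toLinearMap ∘ₗ ψ.codRestrict _ fun x => h ⟨x, rfl⟩,
    by ext x; simp⟩

theorem Function.Exact.exists_comp_eq {i : N →ₗ[R] M} {p : M →ₗ[R] P} (hex : Function.Exact i p)
    (hp : Function.Surjective p) {Y : Type*} [AddCommGroup Y] [Module R Y] {θ : M →ₗ[R] Y}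
    (hθ : θ ∘ₗ i = 0) : ∃ σ : P →ₗ[R] Y, σ ∘ₗ p = θ :=
  ⟨(LinearMap.range i).liftQ θ (by rintro _ ⟨a, rfl⟩; exact LinearMap.congr_fun hθ a) ∘ₗ
    (hex.linearEquivOfSurjective hp).symm.toLinearMap, by ext x; simp⟩

theorem Function.Exact.codRestrict {Y : Type*} [AddCommGroup Y] [Module R Y] {i : N →ₗ[R] M}
    {p : M →ₗ[R] P} (hex : Function.Exact i p) {W : Submodule R M} (h : ∀ x, i x ∈ W)
    {p' : W →ₗ[R] Y} (hp' : ∀ w, p' w = 0 ↔ p w = 0) :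
    Function.Exact (i.codRestrict W h) p' := fun w => by
  rw [hp', hex]
  exact ⟨fun ⟨a, ha⟩ => ⟨a, Subtype.ext ha⟩, fun ⟨a, ha⟩ => ⟨a, congrArg Subtype.val ha⟩⟩

variable {A B : Type*} [AddCommGroup A] [Module R A] [AddCommGroup B] [Module R B]

theorem Function.Exact.surjective_coprod {i : A →ₗ[R] M} {p : M →ₗ[R] B} (hex : Function.Exact i p)
    {πA : N →ₗ[R] A} (hA : Function.Surjective πA) {πB : P →ₗ[R] B} (hB : Function.Surjective πB)
    {v : P →ₗ[R] M} (hv : p ∘ₗ v = πB) : Function.Surjective ((i ∘ₗ πA).coprod v) := fun x => by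
  obtain ⟨y, hy⟩ := hB (p x)
  obtain ⟨a, ha⟩ := (hex (x - v y)).mp (by rw [map_sub, ← hy, ← hv, LinearMap.comp_apply, sub_self])
  obtain ⟨z, rfl⟩ := hA a
  exact ⟨(z, y), by simp [ha]⟩

theorem Function.Exact.injective_prod {i : A →ₗ[R] M} {p : M →ₗ[R] B} (hex : Function.Exact i p)
    {ιA : A →ₗ[R] N} (hA : Function.Injective ιA) {ιB : B →ₗ[R] P} (hB : Function.Injective ιB)
    {w : M →ₗ[R] N} (hw : w ∘ₗ i = ιA) : Function.Injective (w.prod (ιB ∘ₗ p)) := by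
  refine (injective_iff_map_eq_zero _).mpr fun x hx => ?_
  obtain ⟨a, rfl⟩ := (hex x).mp <|
    (injective_iff_map_eq_zero' ιB).mp hB _ |>.mp (congrArg Prod.snd hx)
  have ha : ιA a = 0 := by simpa [← hw] using congrArg Prod.fst hx
  rw [(injective_iff_map_eq_zero ιA).mp hA a ha, map_zero]

end Exact

def ExtOneVanishes (C Q : ModuleCat.{u} R) : Prop :=
  ∀ (X : ModuleCat.{u} R) (s : ShortExactSeq Q X C), ∃ r : X →ₗ[R] Q, r ∘ₗ s.i = LinearMap.id

namespace ExtOneVanishes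

open LinearMap Submodule

variable {A X C C' C'' Q : ModuleCat.{u} R}

/-- Extending `f` along `s.i` amounts to splitting the pushout of `s` along `f`. -/
theorem exists_comp_eq (h : ExtOneVanishes C Q) (s : ShortExactSeq A X C) (f : A →ₗ[R] Q) :
    ∃ g : X →ₗ[R] Q, g ∘ₗ s.i = f := by
  let D := range (f.prod (-s.i))
  have hD : D ≤ ker (s.p ∘ₗ snd R Q X) := by
    rintro _ ⟨a, rfl⟩
    simp [s.exact.apply_apply_eq_zero]
  have hmk : ∀ a, D.mkQ (0, s.i a) = D.mkQ (f a, 0) := fun a => by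
    rw [mkQ_apply, mkQ_apply, Submodule.Quotient.eq]
    exact ⟨-a, by simp⟩
  let push : ShortExactSeq Q (ModuleCat.of R ((Q × X) ⧸ D)) C :=
    { i := D.mkQ ∘ₗ inl R Q X
      p := D.liftQ _ hD
      injective := by
        refine (injective_iff_map_eq_zero _).mpr fun c hc => ?_
        obtain ⟨a, ha⟩ := (Quotient.mk_eq_zero D).mp hc
        have hia : s.i a = 0 := by simpa using congrArg Prod.snd ha
        have hfa : f a = c := by simpa using congrArg Prod.fst ha
        rw [← hfa, (injective_iff_map_eq_zero s.i).mp s.injective a hia, map_zero]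
      surjective := fun c => by
        obtain ⟨x, rfl⟩ := s.surjective c
        exact ⟨D.mkQ (0, x), rfl⟩
      exact := by
        intro y
        obtain ⟨⟨c, x⟩, rfl⟩ := D.mkQ_surjective y
        refine ⟨fun hx => ?_, ?_⟩
        · obtain ⟨a, rfl⟩ := (s.exact x).mp hx
          refine ⟨c + f a, ?_⟩
          rw [LinearMap.comp_apply, mkQ_apply, mkQ_apply, Submodule.Quotient.eq]
          exact ⟨a, by simp⟩
        · rintro ⟨c', hc'⟩
          rw [← hc']
          simp }
  obtain ⟨r, hr⟩ := h _ push
  refine ⟨r ∘ₗ D.mkQ ∘ₗ inr R Q X, LinearMap.ext fun a => ?_⟩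
  simpa [push, hmk] using LinearMap.congr_fun hr (f a)

/-- Lift `s.p` through `t.p` to `ψ` and extend the induced `A → Q` to `g`; then `ψ - t.i ∘ g`
descends to a section of `t.p`. -/
theorem of_projective_presentation {P : ModuleCat.{u} R} [Module.Projective R P]
    (s : ShortExactSeq A P C) (h : ∀ f : A →ₗ[R] Q, ∃ g : P →ₗ[R] Q, g ∘ₗ s.i = f) :
    ExtOneVanishes C Q := by
  intro X t
  obtain ⟨ψ, hψ⟩ := Module.projective_lifting_property t.p s.p t.surjective
  obtain ⟨f, hf⟩ := exists_comp_eq_of_range_le t.injective (ψ := ψ ∘ₗ s.i) <| by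
    rintro _ ⟨a, rfl⟩
    refine (t.exact _).mp ?_
    rw [← LinearMap.comp_apply t.p, ← LinearMap.comp_assoc, hψ, LinearMap.comp_apply,
      s.exact.apply_apply_eq_zero]
  obtain ⟨g, hg⟩ := h f
  obtain ⟨σ, hσ⟩ := s.exact.exists_comp_eq s.surjective (θ := ψ - t.i ∘ₗ g) <| by
    rw [LinearMap.sub_comp, LinearMap.comp_assoc, hg, hf, sub_self]
  have hσ' : t.p ∘ₗ σ = LinearMap.id := by
    rw [← LinearMap.cancel_right s.surjective, LinearMap.comp_assoc, hσ, LinearMap.comp_sub,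
      hψ, ← LinearMap.comp_assoc, t.exact.linearMap_comp_eq_zero, LinearMap.zero_comp, sub_zero,
      LinearMap.id_comp]
  exact ⟨_, ((t.exact.splitInjectiveEquiv t.surjective).symm
    (t.exact.splitSurjectiveEquiv t.injective ⟨σ, hσ'⟩)).2⟩

theorem of_linearEquiv_prod (e : C'' ≃ₗ[R] C × C') (h : ExtOneVanishes C'' Q) :
    ExtOneVanishes C Q := by
  intro X t
  obtain ⟨r, hr⟩ := h (ModuleCat.of R (X × C'))
    { i := inl R X C' ∘ₗ t.i
      p := e.symm.toLinearMap ∘ₗ t.p.prodMap LinearMap.id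
      injective := LinearMap.inl_injective.comp t.injective
      surjective := e.symm.surjective.comp (t.surjective.prodMap Function.surjective_id)
      exact := by
        rw [LinearEquiv.postcomp_exact_iff_exact]
        rintro ⟨x, c⟩
        simp only [prodMap_apply, LinearMap.id_apply, Set.mem_range,
          LinearMap.comp_apply, inl_apply, Prod.ext_iff, Prod.fst_zero, Prod.snd_zero, t.exact x]
        exact ⟨fun ⟨⟨a, ha⟩, hc⟩ => ⟨a, ha, hc.symm⟩, fun ⟨a, ha, hc⟩ => ⟨⟨a, ha⟩, hc.symm⟩⟩ }
  exact ⟨r ∘ₗ inl R X C', hr⟩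

theorem of_shortExact (s : ShortExactSeq C' C C'') (h' : ExtOneVanishes C' Q)
    (h'' : ExtOneVanishes C'' Q) : ExtOneVanishes C Q := by
  intro X t
  let W := ker (s.p ∘ₗ t.p)
  have hiW : ∀ a, t.i a ∈ W := fun a => by simp [W, t.exact.apply_apply_eq_zero]
  obtain ⟨q, hq⟩ := exists_comp_eq_of_range_le s.injective (ψ := t.p ∘ₗ W.subtype) <| by
    rintro _ ⟨w, rfl⟩
    exact (s.exact _).mp w.2
  have hq' : ∀ w, s.i (q w) = t.p w := LinearMap.congr_fun hq
  let sW : ShortExactSeq Q (ModuleCat.of R W) C' :=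
    { i := t.i.codRestrict W hiW
      p := q
      injective := fun a b hab => t.injective (congrArg Subtype.val hab)
      surjective := fun c => by
        obtain ⟨x, hx⟩ := t.surjective (s.i c)
        have hxW : x ∈ W := by simp [W, hx, s.exact.apply_apply_eq_zero]
        exact ⟨⟨x, hxW⟩, s.injective (by rw [hq', ← hx])⟩
      exact := t.exact.codRestrict hiW fun w => by
        rw [← (injective_iff_map_eq_zero' s.i).mp s.injective, hq'] }
  obtain ⟨g₁, hg₁⟩ := h'.exists_comp_eq sW LinearMap.id
  obtain ⟨g, hg⟩ := h''.exists_comp_eq (X := X)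
    ⟨W.subtype, s.p ∘ₗ t.p, Subtype.val_injective, s.surjective.comp t.surjective,
      exact_subtype_ker_map _⟩ g₁
  exact ⟨g, by rw [← hg₁, ← hg]; rfl⟩

end ExtOneVanishes

def ExtOneVanishesQP (C : ModuleCat.{u} R) : Prop :=
  ∀ Q : ModuleCat.{u} R, QuasiProjective Q → ExtOneVanishes C Q

theorem ExtOneVanishesQP.of_shortExact {C' C C'' : ModuleCat.{u} R} (s : ShortExactSeq C' C C'')
    (h' : ExtOneVanishesQP C') (h'' : ExtOneVanishesQP C'') : ExtOneVanishesQP C :=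
  fun Q hQ => (h' Q hQ).of_shortExact s (h'' Q hQ)

theorem ExtOneVanishesQP.of_linearEquiv_prod {C C' C'' : ModuleCat.{u} R}
    (e : C'' ≃ₗ[R] C × C') (h : ExtOneVanishesQP C'') : ExtOneVanishesQP C :=
  fun Q hQ => (h Q hQ).of_linearEquiv_prod e

theorem QuasiProjective.of_projective {P : ModuleCat.{u} R} [Module.Projective R P] :
    QuasiProjective P := by
  intro B g hg f
  obtain ⟨h, hh⟩ := Module.projective_lifting_property g.hom f.hom hg
  exact ⟨ModuleCat.ofHom h, ModuleCat.hom_ext hh⟩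

section Horseshoe

open LinearMap Submodule

variable {A X B A₁ PA B₁ PB : ModuleCat.{u} R}

/-- The kernel half of the horseshoe lemma. -/
theorem nonempty_shortExactSeq_ker_coprod (s : ShortExactSeq A X B) (sA : ShortExactSeq A₁ PA A)
    (sB : ShortExactSeq B₁ PB B) {v : PB →ₗ[R] X} (hv : s.p ∘ₗ v = sB.p) :
    Nonempty (ShortExactSeq A₁ (ModuleCat.of R (ker ((s.i ∘ₗ sA.p).coprod v))) B₁) := by
  have hv' : ∀ y, s.p (v y) = sB.p y := LinearMap.congr_fun hv
  let N := ker ((s.i ∘ₗ sA.p).coprod v)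
  obtain ⟨β, hβ⟩ := exists_comp_eq_of_range_le sB.injective
    (ψ := snd R PA PB ∘ₗ N.subtype) <| by
      rintro _ ⟨w, rfl⟩
      refine (sB.exact _).mp ?_
      have hw : s.i (sA.p (w : PA × PB).1) + v (w : PA × PB).2 = 0 := w.2
      simpa [hv', s.exact.apply_apply_eq_zero] using congrArg s.p hw
  have hβ' : ∀ w, sB.i (β w) = (w : PA × PB).2 := LinearMap.congr_fun hβ
  have hα : ∀ a, (sA.i.prod 0) a ∈ N := fun a => by
    simp [N, sA.exact.apply_apply_eq_zero]
  refine ⟨⟨(sA.i.prod 0).codRestrict N hα, β, ?_, ?_, ?_⟩⟩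
  · exact fun a b hab => sA.injective (congrArg (fun w : N => (w : PA × PB).1) hab)
  · intro b
    obtain ⟨a, ha⟩ := (s.exact (v (sB.i b))).mp (by rw [hv', sB.exact.apply_apply_eq_zero])
    obtain ⟨z, rfl⟩ := sA.surjective a
    have hmem : (-z, sB.i b) ∈ N := by simp [N, ha]
    exact ⟨⟨_, hmem⟩, sB.injective (hβ' _)⟩
  · intro w
    rw [← (injective_iff_map_eq_zero' sB.i).mp sB.injective, hβ']
    constructor
    · intro h2
      have hw : s.i (sA.p (w : PA × PB).1) + v (w : PA × PB).2 = 0 := w.2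
      have h1 : s.i (sA.p (w : PA × PB).1) = 0 := by simpa [h2] using hw
      obtain ⟨a, ha⟩ := (sA.exact _).mp ((injective_iff_map_eq_zero' s.i).mp s.injective _ |>.mp h1)
      exact ⟨a, Subtype.ext (Prod.ext ha h2.symm)⟩
    · rintro ⟨a, rfl⟩
      rfl

/-- The cokernel half of the horseshoe lemma for coresolutions. -/
theorem nonempty_shortExactSeq_coker_prod (s : ShortExactSeq A X B)
    (sA : ShortExactSeq A PA A₁) (sB : ShortExactSeq B PB B₁) {w : X →ₗ[R] PA}
    (hw : w ∘ₗ s.i = sA.i) :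
    Nonempty (ShortExactSeq A₁ (ModuleCat.of R ((PA × PB) ⧸ range (w.prod (sB.i ∘ₗ s.p)))) B₁) := by
  have hw' : ∀ a, w (s.i a) = sA.i a := LinearMap.congr_fun hw
  let j : X →ₗ[R] PA × PB := w.prod (sB.i ∘ₗ s.p)
  let D := range j
  have hD : D ≤ ker (sB.p ∘ₗ snd R PA PB) := by
    rintro _ ⟨x, rfl⟩
    simp [j, sB.exact.apply_apply_eq_zero]
  obtain ⟨α, hα⟩ := sA.exact.exists_comp_eq sA.surjective (θ := D.mkQ ∘ₗ inl R PA PB) <| by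
    ext a
    simp only [LinearMap.comp_apply, inl_apply, mkQ_apply, Submodule.Quotient.mk_eq_zero,
      LinearMap.zero_apply]
    exact ⟨s.i a, by simp [j, hw', s.exact.apply_apply_eq_zero]⟩
  have hα' : ∀ z, α (sA.p z) = D.mkQ (z, 0) := LinearMap.congr_fun hα
  refine ⟨⟨α, D.liftQ _ hD, ?_, ?_, ?_⟩⟩
  · refine (injective_iff_map_eq_zero α).mpr fun a₁ ha₁ => ?_
    obtain ⟨z, rfl⟩ := sA.surjective a₁
    rw [hα', mkQ_apply, Quotient.mk_eq_zero] at ha₁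
    obtain ⟨x, hx⟩ := ha₁
    obtain ⟨a, rfl⟩ := (s.exact x).mp <|
      (injective_iff_map_eq_zero' sB.i).mp sB.injective _ |>.mp (congrArg Prod.snd hx)
    have hz : sA.i a = z := by simpa [j, hw'] using congrArg Prod.fst hx
    rw [← hz, sA.exact.apply_apply_eq_zero]
  · intro b
    obtain ⟨y, rfl⟩ := sB.surjective b
    exact ⟨D.mkQ (0, y), rfl⟩
  · intro n
    obtain ⟨⟨z, y⟩, rfl⟩ := D.mkQ_surjective n
    constructor
    · intro h
      obtain ⟨b, rfl⟩ := (sB.exact y).mp h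
      obtain ⟨x, rfl⟩ := s.surjective b
      refine ⟨sA.p (z - w x), ?_⟩
      rw [hα', mkQ_apply, mkQ_apply, Submodule.Quotient.eq]
      exact ⟨-x, by simp [j]⟩
    · rintro ⟨a₁, ha₁⟩
      obtain ⟨z, rfl⟩ := sA.surjective a₁
      rw [← ha₁, hα']
      simp

end Horseshoe

/-- In the construction below `Z`, `Z'` are the `n`-th syzygies of `M`, `M'` and `L = K (n + 1)`;
dually for `CosyzygyExtension`. -/
structure SyzygyExtension (L Z Z' : ModuleCat.{u} R) where
  N : ModuleCat.{u} R
  P : ModuleCat.{u} R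
  projective : Module.Projective R P
  cover : ShortExactSeq N P Z
  extension : ShortExactSeq L N Z'

structure CosyzygyExtension (L Y Y' : ModuleCat.{u} R) where
  N : ModuleCat.{u} R
  T : ModuleCat.{u} R
  projective : Module.Projective R T
  cover : ShortExactSeq Y T N
  extension : ShortExactSeq Y' N L

attribute [instance] SyzygyExtension.projective CosyzygyExtension.projective

open LinearMap in
theorem SyzygyExtension.nonempty_of_linearEquiv_prod {L P K Z Z' : ModuleCat.{u} R}
    [Module.Projective R P] (s : ShortExactSeq L P K) (e : K ≃ₗ[R] Z × Z') :
    Nonempty (SyzygyExtension L Z Z') := by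
  let q : P →ₗ[R] Z := fst R Z Z' ∘ₗ e.toLinearMap ∘ₗ s.p
  have hi : ∀ a, s.i a ∈ ker q := fun a => by simp [q, s.exact.apply_apply_eq_zero]
  refine ⟨⟨ModuleCat.of R (ker q), P, ‹_›,
    ⟨(ker q).subtype, q, Subtype.val_injective,
      Prod.fst_surjective.comp (e.surjective.comp s.surjective), exact_subtype_ker_map q⟩,
    ⟨s.i.codRestrict _ hi, snd R Z Z' ∘ₗ e.toLinearMap ∘ₗ s.p ∘ₗ (ker q).subtype,
      fun a b hab => s.injective (congrArg Subtype.val hab), fun z' => ?_,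
      s.exact.codRestrict hi fun w => ?_⟩⟩⟩
  · obtain ⟨x, hx⟩ := s.surjective (e.symm (0, z'))
    exact ⟨⟨x, by simp [q, hx]⟩, by simp [hx]⟩
  · have hw : (e (s.p w)).1 = 0 := w.2
    rw [← e.map_eq_zero_iff, Prod.ext_iff]
    simp [hw]

open LinearMap Submodule in
theorem CosyzygyExtension.nonempty_of_linearEquiv_prod {K P L Y Y' : ModuleCat.{u} R}
    [Module.Projective R P] (s : ShortExactSeq K P L) (e : K ≃ₗ[R] Y × Y') :
    Nonempty (CosyzygyExtension L Y Y') := by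
  let j : Y →ₗ[R] P := s.i ∘ₗ e.symm.toLinearMap ∘ₗ inl R Y Y'
  let D := range j
  have hD : D ≤ ker s.p := by
    rintro _ ⟨y, rfl⟩
    exact s.exact.apply_apply_eq_zero _
  refine ⟨⟨ModuleCat.of R (P ⧸ D), P, ‹_›,
    ⟨j, D.mkQ, s.injective.comp (e.symm.injective.comp inl_injective), D.mkQ_surjective,
      exact_map_mkQ_range j⟩,
    ⟨D.mkQ ∘ₗ s.i ∘ₗ e.symm.toLinearMap ∘ₗ inr R Y Y', D.liftQ s.p hD, ?_,
      surjective_range_liftQ hD s.surjective, fun n => ?_⟩⟩⟩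
  · refine (injective_iff_map_eq_zero _).mpr fun y' hy' => ?_
    obtain ⟨y, hy⟩ := (Submodule.Quotient.mk_eq_zero D).mp hy'
    exact (congrArg Prod.snd (e.symm.injective (s.injective hy))).symm
  · obtain ⟨x, rfl⟩ := D.mkQ_surjective n
    constructor
    · intro hx
      obtain ⟨k, rfl⟩ := (s.exact x).mp hx
      obtain ⟨⟨y, y'⟩, rfl⟩ := e.symm.surjective k
      refine ⟨y', ?_⟩
      rw [LinearMap.comp_apply, mkQ_apply, mkQ_apply, Submodule.Quotient.eq]
      refine ⟨-y, ?_⟩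
      show s.i (e.symm (-y, 0)) = s.i (e.symm (0, y')) - s.i (e.symm (y, y'))
      rw [← map_sub, ← map_sub]
      simp
    · rintro ⟨y', hy'⟩
      rw [← hy']
      simp [s.exact.apply_apply_eq_zero]

theorem SyzygyExtension.nonempty_next {L L' PL Z Z' : ModuleCat.{u} R} [Module.Projective R PL]
    (h : SyzygyExtension L Z Z') (h' : SyzygyExtension L Z' Z) (s : ShortExactSeq L' PL L) :
    Nonempty (SyzygyExtension L' h.N h'.N) := by
  obtain ⟨v, hv⟩ := Module.projective_lifting_property h.extension.p h'.cover.p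
    h.extension.surjective
  let q := (h.extension.i ∘ₗ s.p).coprod v
  exact ⟨⟨ModuleCat.of R (LinearMap.ker q), ModuleCat.of R (PL × h'.P),
    inferInstanceAs (Module.Projective R (PL × h'.P)),
    ⟨(LinearMap.ker q).subtype, q, Subtype.val_injective,
      h.extension.exact.surjective_coprod s.surjective h'.cover.surjective hv,
      LinearMap.exact_subtype_ker_map q⟩,
    (nonempty_shortExactSeq_ker_coprod h.extension s h'.cover hv).some⟩⟩

theorem CosyzygyExtension.nonempty_next {L L' PL Y Y' : ModuleCat.{u} R}
    [Module.Projective R PL] (h : CosyzygyExtension L Y Y') (h' : CosyzygyExtension L Y' Y)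
    (s : ShortExactSeq L PL L') (hL : ExtOneVanishes L h'.T) :
    Nonempty (CosyzygyExtension L' h.N h'.N) := by
  obtain ⟨w, hw⟩ := hL.exists_comp_eq h.extension h'.cover.i
  let j := w.prod (s.i ∘ₗ h.extension.p)
  exact ⟨⟨ModuleCat.of R ((h'.T × PL) ⧸ LinearMap.range j), ModuleCat.of R (h'.T × PL),
    inferInstanceAs (Module.Projective R (h'.T × PL)),
    ⟨j, (LinearMap.range j).mkQ,
      h.extension.exact.injective_prod h'.cover.injective s.injective hw,
      (LinearMap.range j).mkQ_surjective, LinearMap.exact_map_mkQ_range j⟩,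
    (nonempty_shortExactSeq_coker_prod h.extension h'.cover s hw).some⟩⟩

structure QPCompleteResolution where
  K : ℤ → ModuleCat.{u} R
  P : ℤ → ModuleCat.{u} R
  ses : ∀ n, ShortExactSeq (K (n + 1)) (P n) (K n)
  projective : ∀ n, Module.Projective R (P n)
  extOneVanishes : ∀ n, ExtOneVanishesQP (K n)

attribute [instance] QPCompleteResolution.projective

theorem quasiGorensteinProjective_iff {M : ModuleCat.{u} R} :
    QuasiGorensteinProjective M ↔ ∃ c : QPCompleteResolution (R := R), Nonempty (M ≅ c.K 0) := by
  constructor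
  · rintro ⟨K, P, ι, π, hP, hι, hπ, hex, hlift, hM⟩
    let ses n : ShortExactSeq (K (n + 1)) (P n) (K n) := ⟨(ι n).hom, (π n).hom, hι n, hπ n, hex n⟩
    refine ⟨⟨K, P, ses, hP, fun n Q hQ => ExtOneVanishes.of_projective_presentation (ses n) ?_⟩, hM⟩
    intro f
    obtain ⟨g, hg⟩ := hlift n Q hQ (ModuleCat.ofHom f)
    exact ⟨g.hom, congrArg ModuleCat.Hom.hom hg⟩
  · rintro ⟨c, hM⟩
    refine ⟨c.K, c.P, fun n => ModuleCat.ofHom (c.ses n).i, fun n => ModuleCat.ofHom (c.ses n).p,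
      c.projective, fun n => (c.ses n).injective, fun n => (c.ses n).surjective,
      fun n => (c.ses n).exact, fun n Q hQ f => ?_, hM⟩
    obtain ⟨g, hg⟩ := (c.extOneVanishes n Q hQ).exists_comp_eq (c.ses n) f.hom
    exact ⟨ModuleCat.ofHom g, ModuleCat.hom_ext hg⟩

namespace QPCompleteResolution

variable (c : QPCompleteResolution (R := R)) {M M' : ModuleCat.{u} R}

structure SyzygyStage (n : ℕ) where
  Z : ModuleCat.{u} R
  Z' : ModuleCat.{u} R
  extOne : ExtOneVanishesQP Z
  extOne' : ExtOneVanishesQP Z'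
  syz : SyzygyExtension (c.K (n + 1)) Z Z'
  syz' : SyzygyExtension (c.K (n + 1)) Z' Z

structure CosyzygyStage (n : ℕ) where
  Y : ModuleCat.{u} R
  Y' : ModuleCat.{u} R
  extOne : ExtOneVanishesQP Y
  extOne' : ExtOneVanishesQP Y'
  cosyz : CosyzygyExtension (c.K (Int.negSucc n)) Y Y'
  cosyz' : CosyzygyExtension (c.K (Int.negSucc n)) Y' Y

variable {c}

noncomputable def SyzygyStage.next {n : ℕ} (d : c.SyzygyStage n) : c.SyzygyStage (n + 1) where
  Z := d.syz.N
  Z' := d.syz'.N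
  extOne := .of_shortExact d.syz.extension (c.extOneVanishes _) d.extOne'
  extOne' := .of_shortExact d.syz'.extension (c.extOneVanishes _) d.extOne
  syz := (d.syz.nonempty_next d.syz' (c.ses (n + 1))).some
  syz' := (d.syz'.nonempty_next d.syz (c.ses (n + 1))).some

noncomputable def CosyzygyStage.next {n : ℕ} (d : c.CosyzygyStage n) : c.CosyzygyStage (n + 1) where
  Y := d.cosyz.N
  Y' := d.cosyz'.N
  extOne := .of_shortExact d.cosyz.extension d.extOne' (c.extOneVanishes _)
  extOne' := .of_shortExact d.cosyz'.extension d.extOne (c.extOneVanishes _)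
  cosyz := (d.cosyz.nonempty_next d.cosyz' (c.ses (Int.negSucc (n + 1)))
    (c.extOneVanishes _ _ .of_projective)).some
  cosyz' := (d.cosyz'.nonempty_next d.cosyz (c.ses (Int.negSucc (n + 1)))
    (c.extOneVanishes _ _ .of_projective)).some

variable (c)

noncomputable def syzygyStage (e : c.K 0 ≃ₗ[R] M × M') : ∀ n, c.SyzygyStage n
  | 0 =>
    { Z := M
      Z' := M'
      extOne := .of_linearEquiv_prod e (c.extOneVanishes 0)
      extOne' := .of_linearEquiv_prod (e.trans (LinearEquiv.prodComm R M M')) (c.extOneVanishes 0)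
      syz := (SyzygyExtension.nonempty_of_linearEquiv_prod (c.ses 0) e).some
      syz' := (SyzygyExtension.nonempty_of_linearEquiv_prod (c.ses 0)
        (e.trans (LinearEquiv.prodComm R M M'))).some }
  | n + 1 => (syzygyStage e n).next

noncomputable def cosyzygyStage (e : c.K 0 ≃ₗ[R] M × M') : ∀ n, c.CosyzygyStage n
  | 0 =>
    { Y := M
      Y' := M'
      extOne := .of_linearEquiv_prod e (c.extOneVanishes 0)
      extOne' := .of_linearEquiv_prod (e.trans (LinearEquiv.prodComm R M M')) (c.extOneVanishes 0)
      cosyz := (CosyzygyExtension.nonempty_of_linearEquiv_prod (c.ses (Int.negSucc 0)) e).some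
      cosyz' := (CosyzygyExtension.nonempty_of_linearEquiv_prod (c.ses (Int.negSucc 0))
        (e.trans (LinearEquiv.prodComm R M M'))).some }
  | n + 1 => (cosyzygyStage e n).next

noncomputable def ofSummand (e : c.K 0 ≃ₗ[R] M × M') : QPCompleteResolution (R := R) where
  K
    | .ofNat m => (c.syzygyStage e m).Z
    | .negSucc k => (c.cosyzygyStage e k).cosyz.N
  P
    | .ofNat m => (c.syzygyStage e m).syz.P
    | .negSucc k => (c.cosyzygyStage e k).cosyz.T
  ses -- `Int.negSucc k + 1` only reduces to `Int.negSucc (k - 1)` or `0` once `k` is split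
    | .ofNat m => (c.syzygyStage e m).syz.cover
    | .negSucc 0 => (c.cosyzygyStage e 0).cosyz.cover
    | .negSucc (k + 1) => (c.cosyzygyStage e (k + 1)).cosyz.cover
  projective
    | .ofNat m => inferInstanceAs (Module.Projective R (c.syzygyStage e m).syz.P)
    | .negSucc k => inferInstanceAs (Module.Projective R (c.cosyzygyStage e k).cosyz.T)
  extOneVanishes
    | .ofNat m => (c.syzygyStage e m).extOne
    | .negSucc k => (c.cosyzygyStage e (k + 1)).extOne

end QPCompleteResolution

/-- The class of quasi-Gorenstein projective modules is closed under direct summands: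
if `M ⊕ M'` is quasi-Gorenstein projective, then so is `M`. -/
theorem quasiGorensteinProjective_of_summand (M M' : ModuleCat.{u} R)
    (h : QuasiGorensteinProjective (M ⊞ M')) : QuasiGorensteinProjective M := by
  obtain ⟨c, ⟨φ⟩⟩ := quasiGorensteinProjective_iff.mp h
  let e : c.K 0 ≃ₗ[R] M × M' := (φ.symm ≪≫ ModuleCat.biprodIsoProd M M').toLinearEquiv
  exact quasiGorensteinProjective_iff.mpr ⟨c.ofSummand e, ⟨Iso.refl M⟩⟩
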